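/- arXiv:1809.04252 — 4 statements merged into one kernel-verified Lean document; each statement's English description precedes it below -/
import Mathlib

section
/- If m > α and α < 1, then with σ(t) = ∫_0^t m ζ_λ(s)^{m-1} ds and η(τ) = ζ_λ(t(τ)) where t(τ) is the inverse of σ, one has η(τ) ~ c_m τ^{1/(m-α)} as τ→∞ for some constant c_m > 0 (explicitly c_m = ((m-α)/m)^{1/(m-α)}). -/
/-! `ζ_λ` solves `ζ' = ζ^α`, `ζ(0) = λ`, so `(ζ^(m-α))' = (m-α) ζ^(m-1)` and
`σ(t) = m/(m-α) (ζ(t)^(m-α) - λ^(m-α))`. Inverting, `η(τ)^(m-α) = c τ + λ^(m-α)` with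
`c = (m-α)/m`, hence `η(τ) = (c τ + λ^(m-α))^(1/(m-α)) ~ c^(1/(m-α)) τ^(1/(m-α))`. -/

open Filter Topology

noncomputable def zeta (α μ : ℝ) (t : ℝ) : ℝ :=
  (μ ^ (1 - α) + (1 - α) * t) ^ (1 / (1 - α))

noncomputable def sigma' (m α lam : ℝ) (t : ℝ) : ℝ :=
  ∫ s in (0:ℝ)..t, m * (zeta α lam s) ^ (m - 1)

section Zeta

variable {α lam t : ℝ}

lemma zeta_base_pos (hα : α < 1) (hlam : 0 < lam) (ht : 0 ≤ t) :
    0 < lam ^ (1 - α) + (1 - α) * t :=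
  add_pos_of_pos_of_nonneg (Real.rpow_pos_of_pos hlam _) (mul_nonneg (by linarith) ht)

lemma zeta_pos (hα : α < 1) (hlam : 0 < lam) (ht : 0 ≤ t) : 0 < zeta α lam t :=
  Real.rpow_pos_of_pos (zeta_base_pos hα hlam ht) _

lemma zeta_zero (hα : α < 1) (hlam : 0 < lam) : zeta α lam 0 = lam := by
  rw [zeta, mul_zero, add_zero, ← Real.rpow_mul hlam.le,
    mul_one_div_cancel (sub_ne_zero.2 hα.ne'), Real.rpow_one]

lemma hasDerivAt_zeta (hα : α < 1) (hlam : 0 < lam) (ht : 0 ≤ t) :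
    HasDerivAt (zeta α lam) (zeta α lam t ^ α) t := by
  have h1α : 1 - α ≠ 0 := sub_ne_zero.2 hα.ne'
  have hbase := zeta_base_pos hα hlam ht
  have hlin : HasDerivAt (fun s : ℝ => lam ^ (1 - α) + (1 - α) * s) (1 - α) t := by
    simpa using ((hasDerivAt_id t).const_mul (1 - α)).const_add (lam ^ (1 - α))
  have hexp : 1 / (1 - α) * α = 1 / (1 - α) - 1 := by field_simp; ring
  refine (hlin.rpow_const (p := 1 / (1 - α)) (Or.inl hbase.ne')).congr_deriv ?_
  rw [zeta, ← Real.rpow_mul hbase.le, hexp, mul_one_div_cancel h1α, one_mul]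

lemma hasDerivAt_zeta_rpow (hα : α < 1) (hlam : 0 < lam) (ht : 0 ≤ t) (p : ℝ) :
    HasDerivAt (fun s => zeta α lam s ^ p) (p * zeta α lam t ^ (p + α - 1)) t := by
  have hz := zeta_pos hα hlam ht
  convert (hasDerivAt_zeta hα hlam ht).rpow_const (p := p) (Or.inl hz.ne') using 1
  rw [mul_comm _ p, mul_assoc, ← Real.rpow_add hz]
  ring_nf

lemma sigma'_eq (m : ℝ) (hα : α < 1) (hmα : α ≠ m) (hlam : 0 < lam) (ht : 0 ≤ t) :
    sigma' m α lam t = m / (m - α) * (zeta α lam t ^ (m - α) - lam ^ (m - α)) := by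
  have hmα' : m - α ≠ 0 := sub_ne_zero.2 hmα.symm
  have hderiv : ∀ s ∈ Set.uIcc 0 t, HasDerivAt (fun s => m / (m - α) * zeta α lam s ^ (m - α))
      (m * zeta α lam s ^ (m - 1)) s := by
    intro s hs
    rw [Set.uIcc_of_le ht] at hs
    refine ((hasDerivAt_zeta_rpow hα hlam hs.1 (m - α)).const_mul (m / (m - α))).congr_deriv ?_
    rw [show m - α + α - 1 = m - 1 by ring]
    field_simp
  have hcont : ContinuousOn (fun s => m * zeta α lam s ^ (m - 1)) (Set.uIcc 0 t) := by
    intro s hs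
    rw [Set.uIcc_of_le ht] at hs
    exact (continuousAt_const.mul
      (hasDerivAt_zeta_rpow hα hlam hs.1 (m - 1)).continuousAt).continuousWithinAt
  rw [sigma', intervalIntegral.integral_eq_sub_of_hasDerivAt hderiv hcont.intervalIntegrable,
    zeta_zero hα hlam]
  ring

end Zeta

lemma tendsto_add_rpow_div_mul_rpow {c : ℝ} (hc : 0 < c) (L e : ℝ) :
    Tendsto (fun τ : ℝ => (c * τ + L) ^ e / (c ^ e * τ ^ e)) atTop (𝓝 1) := by
  have hlim : Tendsto (fun τ : ℝ => 1 + L / c / τ) atTop (𝓝 1) := by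
    simpa using (tendsto_const_nhds (x := (1 : ℝ))).add
      ((tendsto_const_nhds (x := L / c)).div_atTop tendsto_id)
  have hrpow := (Real.continuousAt_rpow_const 1 e (Or.inl one_ne_zero)).tendsto.comp hlim
  rw [Real.one_rpow] at hrpow
  refine hrpow.congr' ?_
  filter_upwards [eventually_gt_atTop (0 : ℝ), eventually_ge_atTop (-L / c)] with τ hτ hτL
  have hcτL : 0 ≤ c * τ + L := by
    have := (div_le_iff₀ hc).1 hτL
    linarith
  rw [Function.comp_apply, ← Real.mul_rpow hc.le hτ.le, ← Real.div_rpow hcτL (by positivity)]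
  congr 1
  field_simp

theorem stmt_5 (m α lam : ℝ) (hm : 0 < m) (hα : α < 1) (hmα : α < m) (hlam : 0 < lam)
    (tinv : ℝ → ℝ) (htinv0 : ∀ τ ≥ (0:ℝ), 0 ≤ tinv τ)
    (htinv : ∀ τ ≥ (0:ℝ), sigma' m α lam (tinv τ) = τ) :
    Tendsto (fun τ : ℝ =>
        zeta α lam (tinv τ) / (((m - α) / m) ^ (1 / (m - α)) * τ ^ (1 / (m - α))))
      atTop (nhds 1) := by
  have hmα' : 0 < m - α := by linarith
  refine (tendsto_add_rpow_div_mul_rpow (div_pos hmα' hm) (lam ^ (m - α)) (1 / (m - α))).congr' ?_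
  filter_upwards [eventually_ge_atTop 0] with τ hτ
  have hpow : zeta α lam (tinv τ) ^ (m - α) = (m - α) / m * τ + lam ^ (m - α) := by
    have h := htinv τ hτ
    rw [sigma'_eq m hα hmα.ne hlam (htinv0 τ hτ)] at h
    field_simp at h ⊢
    linarith
  rw [← hpow, one_div, Real.rpow_rpow_inv (zeta_pos hα hlam (htinv0 τ hτ)).le hmα'.ne']
end

section
/- If m = α < 1, then with σ and η defined via ζ_λ as above, log η(τ) ~ d_m τ as τ→∞ for some constant d_m > 0, i.e. log η(τ)/τ converges to a positive constant as τ→∞. -/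
open Filter

theorem stmt_6 (m α lam : ℝ) (hm : 0 < m) (hα : α < 1) (hmα : m = α) (hm0 : 0 < α)
    (hlam : 0 < lam)
    (tinv : ℝ → ℝ) (htinv0 : ∀ τ ≥ (0:ℝ), 0 ≤ tinv τ)
    (htinv : ∀ τ ≥ (0:ℝ), sigma' m α lam (tinv τ) = τ) :
    ∃ d > (0:ℝ), Tendsto (fun τ : ℝ => Real.log (zeta α lam (tinv τ)) / τ) atTop (nhds d) := by
  have h1α : (0:ℝ) < 1 - α := by linarith
  set c := lam ^ (1 - α) with hc
  have hcpos : 0 < c := Real.rpow_pos_of_pos hlam _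
  -- the explicit formula for sigma'
  have hsig : ∀ t ≥ (0:ℝ), sigma' m α lam t
      = (α/(1-α)) * (Real.log (c + (1-α)*t) - Real.log c) := by
    intro t ht
    have huIcc : Set.uIcc (0:ℝ) t = Set.Icc 0 t := Set.uIcc_of_le ht
    have hpos : ∀ s ∈ Set.uIcc (0:ℝ) t, 0 < c + (1-α)*s := by
      intro s hs
      rw [huIcc] at hs
      nlinarith [hs.1]
    have hderiv : ∀ s ∈ Set.uIcc (0:ℝ) t,
        HasDerivAt (fun u => (α/(1-α)) * Real.log (c + (1-α)*u))
          (m * (zeta α lam s) ^ (m-1)) s := by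
      intro s hs
      have hps := hpos s hs
      have h1 : HasDerivAt (fun u : ℝ => c + (1-α)*u) (1-α) s := by
        exact (((hasDerivAt_id' s).const_mul (1-α)).const_add c).congr_deriv (by ring)
      have h2 := (h1.log (ne_of_gt hps)).const_mul (α/(1-α))
      refine h2.congr_deriv ?_
      have hz : zeta α lam s ^ (α - 1) = (c + (1-α)*s)⁻¹ := by
        rw [zeta, ← hc, ← Real.rpow_mul hps.le]
        have : 1 / (1 - α) * (α - 1) = -1 := by field_simp; ring
        rw [this, Real.rpow_neg_one]
      rw [hmα, hz]
      field_simp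
    have hcont : ContinuousOn (fun s => m * (zeta α lam s) ^ (m-1)) (Set.uIcc (0:ℝ) t) := by
      apply ContinuousOn.mul continuousOn_const
      apply ContinuousOn.rpow_const
      · unfold zeta
        rw [← hc]
        apply ContinuousOn.rpow_const
        · exact (continuousOn_const.add (continuousOn_const.mul continuousOn_id))
        · intro x hx; exact Or.inl (ne_of_gt (hpos x hx))
      · intro x hx
        left
        unfold zeta
        rw [← hc]
        exact ne_of_gt (Real.rpow_pos_of_pos (hpos x hx) _)
    have := intervalIntegral.integral_eq_sub_of_hasDerivAt hderiv
      (hcont.intervalIntegrable)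
    rw [sigma', this]
    simp only [mul_zero, add_zero]
    ring
  -- explicit formula for log zeta (tinv τ)
  have hkey : ∀ τ ≥ (1:ℝ), Real.log (zeta α lam (tinv τ)) = τ / α + Real.log lam := by
    intro τ hτ
    have hτ0 : (0:ℝ) ≤ τ := by linarith
    have ht0 := htinv0 τ hτ0
    have heq := htinv τ hτ0
    rw [hsig _ ht0] at heq
    have hps : 0 < c + (1-α) * tinv τ := by nlinarith
    have hL : Real.log (c + (1-α) * tinv τ) = (1-α)/α * τ + Real.log c := by
      have hαne : α ≠ 0 := ne_of_gt hm0
      field_simp at heq ⊢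
      nlinarith [heq]
    have hlogc : Real.log c = (1-α) * Real.log lam := Real.log_rpow hlam _
    rw [zeta, ← hc, Real.log_rpow hps, hL, hlogc]
    field_simp
  refine ⟨1/α, by positivity, ?_⟩
  have hlim : Tendsto (fun τ : ℝ => 1/α + Real.log lam / τ) atTop (nhds (1/α)) := by
    have : Tendsto (fun τ : ℝ => Real.log lam / τ) atTop (nhds 0) :=
      Tendsto.div_atTop tendsto_const_nhds tendsto_id
    simpa using tendsto_const_nhds.add this
  apply hlim.congr'
  filter_upwards [eventually_ge_atTop (1:ℝ)] with τ hτ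
  have hτ0 : τ ≠ 0 := by linarith
  rw [hkey τ hτ]
  field_simp
end

section
/- For every K ≥ 0 and δ > 0 there is C > 0 such that for all φ ∈ L^1(ℝ^N, (1+|x|^K)dx) and t > 0, ∫ |e^{tΔ}φ|(x)(1+|x|^K) dx ≤ (1+δ) ∫ |φ(x)|(1+|x|^K) dx + C(1 + t^{K/2})‖φ‖_{L^1}. -/
/-!
Since `|e^{tΔ}φ| ≤ G_t ∗ |φ|`, Tonelli and translation invariance bound the weighted norm of
`e^{tΔ}φ` by `∫ |φ(y)| m_t(y) dy` with `m_t(y) = ∫ G_t(z) (1 + |z + y|^K) dz`. Splitting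
`|z + y|^K ≤ (1 + η)^K |y|^K + (1 + η⁻¹)^K |z|^K` according as `|z| ≤ η |y|` or not, with
`(1 + η)^K ≤ 1 + δ`, gives `m_t(y) ≤ (1 + δ)(1 + |y|^K) + (1 + η⁻¹)^K ∫ G_t(z) |z|^K dz`, and the
parabolic scaling `z = √t u` turns the last integral into `t^{K/2} ∫ G_1(u) |u|^K du`.
-/

open Real MeasureTheory ENNReal

noncomputable def heatK (N : ℕ) (x : EuclideanSpace ℝ (Fin N)) (t : ℝ) : ℝ :=
  (4 * π * t) ^ (-(N : ℝ) / 2) * Real.exp (-‖x‖ ^ 2 / (4 * t))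

noncomputable def heatSg (N : ℕ) (t : ℝ) (φ : EuclideanSpace ℝ (Fin N) → ℝ) :
    EuclideanSpace ℝ (Fin N) → ℝ :=
  fun x => ∫ y, heatK N (x - y) t * φ y

theorem integrable_exp_neg_mul_sq_norm {V : Type*} [NormedAddCommGroup V] [InnerProductSpace ℝ V]
    [FiniteDimensional ℝ V] [MeasurableSpace V] [BorelSpace V] {b : ℝ} (hb : 0 < b) :
    Integrable fun v : V => Real.exp (-b * ‖v‖ ^ 2) := by
  have h := (GaussianFourier.integrable_cexp_neg_mul_sq_norm_add
      (V := V) (b := (b : ℂ)) (by simpa using hb) 0 0).norm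
  simpa [Complex.norm_exp, ← Complex.ofReal_pow] using h

theorem rpow_mul_exp_neg_sq_div_four_le {K r : ℝ} (hK : 0 ≤ K) (hr : 0 ≤ r) :
    r ^ K * Real.exp (-r ^ 2 / 4) ≤ Real.exp (2 * K ^ 2) * Real.exp (-(1 / 8) * r ^ 2) := by
  rw [← Real.exp_add]
  rcases hr.eq_or_lt with rfl | hr
  · calc (0:ℝ) ^ K * Real.exp (-0 ^ 2 / 4) ≤ 1 := by
          rw [zero_pow two_ne_zero, neg_zero, zero_div, Real.exp_zero, mul_one]
          exact Real.zero_rpow_le_one K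
      _ ≤ _ := Real.one_le_exp (by positivity)
  · have hlog : Real.log r ≤ r := (Real.log_le_sub_one_of_pos hr).trans (by linarith)
    rw [Real.rpow_def_of_pos hr, ← Real.exp_add]
    -- `K log r ≤ K r ≤ 2 K² + r² / 8`
    exact Real.exp_le_exp.2
      (by nlinarith [sq_nonneg (r - 4 * K), mul_le_mul_of_nonneg_left hlog hK])

theorem add_rpow_le_one_add_rpow_mul_add {K η a b : ℝ} (hK : 0 ≤ K) (hη : 0 < η)
    (ha : 0 ≤ a) (hb : 0 ≤ b) :
    (a + b) ^ K ≤ (1 + η) ^ K * a ^ K + (1 + η⁻¹) ^ K * b ^ K := by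
  have hA : 0 ≤ (1 + η) ^ K * a ^ K := by positivity
  have hB : 0 ≤ (1 + η⁻¹) ^ K * b ^ K := by positivity
  rcases le_or_gt b (η * a) with hba | hab
  · calc (a + b) ^ K ≤ ((1 + η) * a) ^ K := by gcongr; linarith
      _ ≤ _ := by rw [Real.mul_rpow (by positivity) ha]; linarith
  · have : a ≤ η⁻¹ * b := by rw [le_inv_mul_iff₀ hη]; exact hab.le
    calc (a + b) ^ K ≤ ((1 + η⁻¹) * b) ^ K := by gcongr; linarith
      _ ≤ _ := by rw [Real.mul_rpow (by positivity) hb]; linarith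

theorem one_add_norm_add_rpow_le {E : Type*} [SeminormedAddCommGroup E] {K η : ℝ} (hK : 0 ≤ K)
    (hη : 0 < η) (x y : E) :
    1 + ‖x + y‖ ^ K ≤ (1 + η) ^ K * (1 + ‖y‖ ^ K) + (1 + η⁻¹) ^ K * ‖x‖ ^ K := by
  have h1 : 1 ≤ (1 + η) ^ K := Real.one_le_rpow (by linarith) hK
  have h2 : ‖x + y‖ ^ K ≤ (‖y‖ + ‖x‖) ^ K := by
    gcongr
    exact (norm_add_le x y).trans_eq (add_comm _ _)
  linarith [add_rpow_le_one_add_rpow_mul_add hK hη (norm_nonneg y) (norm_nonneg x)]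

theorem MeasureTheory.Integrable.of_mul_of_one_le {α : Type*} [MeasurableSpace α] {μ : Measure α}
    {f w : α → ℝ} (hw : Measurable w) (hw1 : ∀ x, 1 ≤ w x)
    (hfw : Integrable (fun x => f x * w x) μ) :
    Integrable f μ := by
  have hw0 : ∀ x, w x ≠ 0 := fun x => (zero_lt_one.trans_le (hw1 x)).ne'
  refine hfw.mono ?_ (Filter.Eventually.of_forall fun x => ?_)
  · exact (hfw.aestronglyMeasurable.mul hw.inv.aestronglyMeasurable).congr
      (Filter.Eventually.of_forall fun x => mul_inv_cancel_right₀ (hw0 x) _)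
  · rw [norm_mul]
    exact le_mul_of_one_le_right (norm_nonneg _) ((hw1 x).trans (Real.le_norm_self _))

theorem integral_le_of_lintegral_ofReal_le {α : Type*} [MeasurableSpace α] {μ : Measure α}
    {f : α → ℝ} {r : ℝ} (hf : ∀ x, 0 ≤ f x) (hr : 0 ≤ r)
    (h : ∫⁻ x, ENNReal.ofReal (f x) ∂μ ≤ ENNReal.ofReal r) : ∫ x, f x ∂μ ≤ r := by
  calc ∫ x, f x ∂μ ≤ ‖∫ x, f x ∂μ‖ := Real.le_norm_self _
    _ ≤ (∫⁻ x, ENNReal.ofReal ‖f x‖ ∂μ).toReal := norm_integral_le_lintegral_norm f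
    _ ≤ r := by
      simp_rw [Real.norm_of_nonneg (hf _)]
      exact ENNReal.toReal_le_of_le_ofReal hr h

theorem lintegral_lintegral_sub_mul_eq {G : Type*} [MeasurableSpace G] [AddGroup G]
    [MeasurableAdd₂ G] [MeasurableNeg G] {μ : Measure G} [SFinite μ] [μ.IsAddRightInvariant]
    {k f w : G → ℝ≥0∞} (hk : Measurable k) (hf : AEMeasurable f μ) (hw : Measurable w) :
    ∫⁻ x, (∫⁻ y, k (x - y) * f y ∂μ) * w x ∂μ = ∫⁻ y, f y * ∫⁻ z, k z * w (z + y) ∂μ ∂μ := by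
  calc ∫⁻ x, (∫⁻ y, k (x - y) * f y ∂μ) * w x ∂μ
      = ∫⁻ x, ∫⁻ y, k (x - y) * f y * w x ∂μ ∂μ := by
        refine lintegral_congr fun x => (lintegral_mul_const'' _ ?_).symm
        exact (hk.comp (measurable_const.sub measurable_id)).aemeasurable.mul hf
    _ = ∫⁻ y, ∫⁻ x, k (x - y) * f y * w x ∂μ ∂μ := by
        refine lintegral_lintegral_swap ?_
        exact ((hk.comp (measurable_fst.sub measurable_snd)).aemeasurable.mul
          hf.comp_snd).mul (hw.comp measurable_fst).aemeasurable
    _ = ∫⁻ y, f y * ∫⁻ z, k z * w (z + y) ∂μ ∂μ := by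
        refine lintegral_congr fun y => ?_
        have hm : Measurable fun x => k (x - y) * w x :=
          (hk.comp (measurable_id.sub_const y)).mul hw
        rw [← lintegral_sub_right_eq_self (fun z => k z * w (z + y)) y]
        simp only [sub_add_cancel]
        rw [← lintegral_const_mul _ hm]
        exact lintegral_congr fun x => by ring

theorem exists_pos_one_add_rpow_le {K δ : ℝ} (hδ : 0 < δ) : ∃ η > 0, (1 + η) ^ K ≤ 1 + δ := by
  have hcont : ContinuousAt (fun η : ℝ => (1 + η) ^ K) 0 :=
    (continuousAt_const.add continuousAt_id).rpow_const (Or.inl (by norm_num))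
  have hlt : ∀ᶠ η in nhds 0, (1 + η) ^ K < 1 + δ :=
    hcont.eventually_lt continuousAt_const (by simpa using hδ)
  obtain ⟨η, hη, hη0⟩ :=
    ((hlt.filter_mono (nhdsWithin_le_nhds (s := Set.Ioi 0))).and self_mem_nhdsWithin).exists
  exact ⟨η, hη0, hη.le⟩

section

variable {N : ℕ}

theorem heatK_pos {t : ℝ} (ht : 0 < t) (x : EuclideanSpace ℝ (Fin N)) : 0 < heatK N x t := by
  unfold heatK
  positivity

theorem continuous_heatK (t : ℝ) : Continuous fun x : EuclideanSpace ℝ (Fin N) => heatK N x t := by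
  unfold heatK
  fun_prop

theorem heatK_eq_mul_exp (t : ℝ) (x : EuclideanSpace ℝ (Fin N)) :
    heatK N x t = (4 * π * t) ^ (-(N : ℝ) / 2) * Real.exp (-(4 * t)⁻¹ * ‖x‖ ^ 2) := by
  rw [heatK]
  congr 2
  ring

theorem integrable_heatK {t : ℝ} (ht : 0 < t) :
    Integrable fun x : EuclideanSpace ℝ (Fin N) => heatK N x t := by
  simp_rw [heatK_eq_mul_exp]
  exact (integrable_exp_neg_mul_sq_norm (by positivity)).const_mul _

theorem integral_heatK {t : ℝ} (ht : 0 < t) :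
    ∫ x : EuclideanSpace ℝ (Fin N), heatK N x t = 1 := by
  have h4 : 0 < 4 * π * t := by positivity
  simp_rw [heatK_eq_mul_exp]
  rw [integral_const_mul, GaussianFourier.integral_rexp_neg_mul_sq_norm (by positivity),
    finrank_euclideanSpace_fin, show π / (4 * t)⁻¹ = 4 * π * t by field_simp,
    ← Real.rpow_add h4, neg_div, neg_add_cancel, Real.rpow_zero]

theorem integrable_heatK_one_mul_norm_rpow {K : ℝ} (hK : 0 ≤ K) :
    Integrable fun x : EuclideanSpace ℝ (Fin N) => heatK N x 1 * ‖x‖ ^ K := by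
  refine (((integrable_exp_neg_mul_sq_norm (by norm_num : (0:ℝ) < 1 / 8)).const_mul
    (Real.exp (2 * K ^ 2))).const_mul ((4 * π * 1) ^ (-(N : ℝ) / 2))).mono'
    (by unfold heatK; fun_prop) (Filter.Eventually.of_forall fun x => ?_)
  have hx : 0 ≤ heatK N x 1 * ‖x‖ ^ K := by have := heatK_pos one_pos x; positivity
  rw [Real.norm_of_nonneg hx, heatK, mul_one, mul_one, mul_assoc, mul_comm (Real.exp _)]
  exact mul_le_mul_of_nonneg_left (rpow_mul_exp_neg_sq_div_four_le hK (norm_nonneg x))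
    (by positivity)

theorem heatK_mul_norm_rpow_eq {t : ℝ} (ht : 0 < t) (K : ℝ) (x : EuclideanSpace ℝ (Fin N)) :
    heatK N x t * ‖x‖ ^ K = t ^ (-(N : ℝ) / 2) * t ^ (K / 2) *
      (heatK N ((√t)⁻¹ • x) 1 * ‖(√t)⁻¹ • x‖ ^ K) := by
  have hs : 0 < √t := Real.sqrt_pos.2 ht
  have hnorm : ‖(√t)⁻¹ • x‖ = (√t)⁻¹ * ‖x‖ := by
    rw [norm_smul, Real.norm_of_nonneg (inv_nonneg.2 hs.le)]
  have hsqrt : t ^ (K / 2) = √t ^ K := by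
    rw [Real.sqrt_eq_rpow, ← Real.rpow_mul ht.le, one_div_mul_eq_div]
  rw [heatK, heatK, hnorm, Real.mul_rpow (by positivity) (norm_nonneg x), Real.inv_rpow hs.le,
    mul_pow, inv_pow, Real.sq_sqrt ht.le, mul_one, Real.mul_rpow (by positivity) ht.le, hsqrt]
  field_simp

noncomputable def heatMoment (N : ℕ) (K : ℝ) : ℝ :=
  ∫ x : EuclideanSpace ℝ (Fin N), heatK N x 1 * ‖x‖ ^ K

theorem heatMoment_nonneg (N : ℕ) (K : ℝ) : 0 ≤ heatMoment N K :=
  integral_nonneg fun x => mul_nonneg (heatK_pos one_pos x).le (Real.rpow_nonneg (norm_nonneg x) K)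

theorem integrable_heatK_mul_norm_rpow {t K : ℝ} (ht : 0 < t) (hK : 0 ≤ K) :
    Integrable fun x : EuclideanSpace ℝ (Fin N) => heatK N x t * ‖x‖ ^ K := by
  simp_rw [heatK_mul_norm_rpow_eq ht K]
  exact ((integrable_heatK_one_mul_norm_rpow hK).comp_smul
    (inv_ne_zero (Real.sqrt_pos.2 ht).ne')).const_mul _

theorem integral_heatK_mul_norm_rpow {t : ℝ} (ht : 0 < t) (K : ℝ) :
    ∫ x : EuclideanSpace ℝ (Fin N), heatK N x t * ‖x‖ ^ K
      = t ^ (K / 2) * heatMoment N K := by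
  have hsqrt : √t ^ N = t ^ ((N : ℝ) / 2) := by
    rw [Real.sqrt_eq_rpow, ← Real.rpow_natCast, ← Real.rpow_mul ht.le, one_div_mul_eq_div]
  simp_rw [heatK_mul_norm_rpow_eq ht K]
  rw [integral_const_mul, Measure.integral_comp_inv_smul_of_nonneg volume
      (fun x : EuclideanSpace ℝ (Fin N) => heatK N x 1 * ‖x‖ ^ K) (Real.sqrt_nonneg t),
    finrank_euclideanSpace_fin, smul_eq_mul, hsqrt, mul_right_comm, ← mul_assoc,
    ← Real.rpow_add ht, neg_div, neg_add_cancel, Real.rpow_zero, one_mul, mul_comm, heatMoment]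

theorem lintegral_heatK {t : ℝ} (ht : 0 < t) :
    ∫⁻ x : EuclideanSpace ℝ (Fin N), ENNReal.ofReal (heatK N x t) = 1 := by
  rw [← ofReal_integral_eq_lintegral_ofReal (integrable_heatK ht)
    (Filter.Eventually.of_forall fun x => (heatK_pos ht x).le), integral_heatK ht, ofReal_one]

theorem lintegral_heatK_mul_norm_rpow {t K : ℝ} (ht : 0 < t) (hK : 0 ≤ K) :
    ∫⁻ x : EuclideanSpace ℝ (Fin N), ENNReal.ofReal (heatK N x t * ‖x‖ ^ K)
      = ENNReal.ofReal (t ^ (K / 2) * heatMoment N K) := by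
  rw [← integral_heatK_mul_norm_rpow ht, ofReal_integral_eq_lintegral_ofReal
    (integrable_heatK_mul_norm_rpow ht hK) (Filter.Eventually.of_forall fun x =>
      mul_nonneg (heatK_pos ht x).le (Real.rpow_nonneg (norm_nonneg x) K))]

theorem lintegral_heatK_mul_weight_le {t K η : ℝ} (ht : 0 < t) (hK : 0 ≤ K) (hη : 0 < η)
    (y : EuclideanSpace ℝ (Fin N)) :
    ∫⁻ x, ENNReal.ofReal (heatK N x t) * ENNReal.ofReal (1 + ‖x + y‖ ^ K)
      ≤ ENNReal.ofReal ((1 + η) ^ K * (1 + ‖y‖ ^ K))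
        + ENNReal.ofReal ((1 + η⁻¹) ^ K * (t ^ (K / 2) * heatMoment N K)) := by
  set a := (1 + η) ^ K * (1 + ‖y‖ ^ K)
  set b := (1 + η⁻¹) ^ K
  have hb : 0 ≤ b := by positivity
  have hGm : Measurable fun x => ENNReal.ofReal (heatK N x t) :=
    (continuous_heatK t).measurable.ennreal_ofReal
  calc ∫⁻ x, ENNReal.ofReal (heatK N x t) * ENNReal.ofReal (1 + ‖x + y‖ ^ K)
      ≤ ∫⁻ x, ENNReal.ofReal (heatK N x t) * ENNReal.ofReal a
          + ENNReal.ofReal b * ENNReal.ofReal (heatK N x t * ‖x‖ ^ K) := by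
        refine lintegral_mono fun x => ?_
        have hG := (heatK_pos ht x).le
        rw [← ENNReal.ofReal_mul hG, ← ENNReal.ofReal_mul hG, ← ENNReal.ofReal_mul hb,
          ← ENNReal.ofReal_add (by positivity) (by positivity)]
        refine ENNReal.ofReal_le_ofReal ?_
        nlinarith [mul_le_mul_of_nonneg_left (one_add_norm_add_rpow_le hK hη x y) hG]
    _ = ENNReal.ofReal a + ENNReal.ofReal b * ENNReal.ofReal (t ^ (K / 2) * heatMoment N K) := by
        rw [lintegral_add_left (hGm.mul_const _), lintegral_mul_const _ hGm,
          lintegral_heatK ht, one_mul, lintegral_const_mul', lintegral_heatK_mul_norm_rpow ht hK]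
        exact ENNReal.ofReal_ne_top
    _ = _ := by rw [← ENNReal.ofReal_mul hb]

theorem ofReal_abs_heatSg_le {t : ℝ} (ht : 0 < t) (φ : EuclideanSpace ℝ (Fin N) → ℝ)
    (x : EuclideanSpace ℝ (Fin N)) :
    ENNReal.ofReal |heatSg N t φ x|
      ≤ ∫⁻ y, ENNReal.ofReal (heatK N (x - y) t) * ENNReal.ofReal |φ y| := by
  rw [← Real.enorm_eq_ofReal_abs]
  refine (enorm_integral_le_lintegral_enorm _).trans_eq (lintegral_congr fun y => ?_)
  rw [enorm_mul, Real.enorm_of_nonneg (heatK_pos ht _).le, Real.enorm_eq_ofReal_abs]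

theorem integral_abs_heatSg_mul_weight_le {t K η : ℝ} (ht : 0 < t) (hK : 0 ≤ K) (hη : 0 < η)
    {φ : EuclideanSpace ℝ (Fin N) → ℝ}
    (hφ : Integrable fun x => |φ x| * (1 + ‖x‖ ^ K)) :
    ∫ x, |heatSg N t φ x| * (1 + ‖x‖ ^ K)
      ≤ (1 + η) ^ K * (∫ x, |φ x| * (1 + ‖x‖ ^ K))
        + (1 + η⁻¹) ^ K * (t ^ (K / 2) * heatMoment N K) * ∫ x, |φ x| := by
  set a := (1 + η) ^ K
  set b := (1 + η⁻¹) ^ K * (t ^ (K / 2) * heatMoment N K)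
  have ha : 0 ≤ a := by positivity
  have hb : 0 ≤ b := by have := heatMoment_nonneg N K; positivity
  have hw : Continuous fun x : EuclideanSpace ℝ (Fin N) => 1 + ‖x‖ ^ K := by fun_prop
  have hφ1 : Integrable fun x => |φ x| := hφ.of_mul_of_one_le hw.measurable
    (fun x => le_add_of_nonneg_right (Real.rpow_nonneg (norm_nonneg x) K))
  refine integral_le_of_lintegral_ofReal_le (fun x => by positivity)
    (add_nonneg (mul_nonneg ha (integral_nonneg fun x => by positivity))
      (mul_nonneg hb (integral_nonneg fun x => abs_nonneg _))) ?_
  calc ∫⁻ x, ENNReal.ofReal (|heatSg N t φ x| * (1 + ‖x‖ ^ K))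
      ≤ ∫⁻ x, (∫⁻ y, ENNReal.ofReal (heatK N (x - y) t) * ENNReal.ofReal |φ y|)
          * ENNReal.ofReal (1 + ‖x‖ ^ K) := by
        refine lintegral_mono fun x => ?_
        rw [ENNReal.ofReal_mul (abs_nonneg _)]
        exact mul_le_mul_left (ofReal_abs_heatSg_le ht φ x) _
    _ = ∫⁻ y, ENNReal.ofReal |φ y|
          * ∫⁻ z, ENNReal.ofReal (heatK N z t) * ENNReal.ofReal (1 + ‖z + y‖ ^ K) :=
        lintegral_lintegral_sub_mul_eq (continuous_heatK t).measurable.ennreal_ofReal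
          hφ1.aemeasurable.ennreal_ofReal hw.measurable.ennreal_ofReal
    _ ≤ ∫⁻ y, ENNReal.ofReal |φ y|
          * (ENNReal.ofReal (a * (1 + ‖y‖ ^ K)) + ENNReal.ofReal b) :=
        lintegral_mono fun y => mul_le_mul_right (lintegral_heatK_mul_weight_le ht hK hη y) _
    _ = ∫⁻ y, ENNReal.ofReal (a * (|φ y| * (1 + ‖y‖ ^ K))) + ENNReal.ofReal (b * |φ y|) := by
        refine lintegral_congr fun y => ?_
        rw [mul_add, ← ENNReal.ofReal_mul (abs_nonneg _), ← ENNReal.ofReal_mul (abs_nonneg _)]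
        congr 2 <;> ring
    _ = ENNReal.ofReal (a * ∫ x, |φ x| * (1 + ‖x‖ ^ K)) + ENNReal.ofReal (b * ∫ x, |φ x|) := by
        rw [lintegral_add_left' (hφ.const_mul a).aemeasurable.ennreal_ofReal,
          ← integral_const_mul, ← integral_const_mul,
          ofReal_integral_eq_lintegral_ofReal (hφ.const_mul a)
            (Filter.Eventually.of_forall fun x => by positivity),
          ofReal_integral_eq_lintegral_ofReal (hφ1.const_mul b)
            (Filter.Eventually.of_forall fun x => by positivity)]
    _ = _ := (ENNReal.ofReal_add (mul_nonneg ha (integral_nonneg fun x => by positivity))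
          (mul_nonneg hb (integral_nonneg fun x => abs_nonneg _))).symm

end

theorem stmt_11_general (N : ℕ) (K δ : ℝ) (hK : 0 ≤ K) (hδ : 0 < δ) :
    ∃ C > (0:ℝ), ∀ φ : EuclideanSpace ℝ (Fin N) → ℝ,
      Integrable (fun x => |φ x| * (1 + ‖x‖ ^ K)) volume → ∀ t : ℝ, 0 < t →
        (∫ x, |heatSg N t φ x| * (1 + ‖x‖ ^ K)) ≤
          (1 + δ) * (∫ x, |φ x| * (1 + ‖x‖ ^ K)) +
            C * (1 + t ^ (K / 2)) * (∫ x, |φ x|) := by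
  obtain ⟨η, hη, hηδ⟩ := exists_pos_one_add_rpow_le (K := K) hδ
  have hM := heatMoment_nonneg N K
  refine ⟨(1 + η⁻¹) ^ K * heatMoment N K + 1, by positivity, fun φ hφ t ht => ?_⟩
  refine (integral_abs_heatSg_mul_weight_le ht hK hη hφ).trans (add_le_add ?_ ?_)
  · exact mul_le_mul_of_nonneg_right hηδ (integral_nonneg fun x => by positivity)
  · refine mul_le_mul_of_nonneg_right ?_ (integral_nonneg fun x => abs_nonneg _)
    have : 0 ≤ t ^ (K / 2) := by positivity
    nlinarith [mul_nonneg (by positivity : 0 ≤ (1 + η⁻¹) ^ K) hM]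

theorem stmt_11 (N : ℕ) (hN : 1 ≤ N) (K δ : ℝ) (hK : 0 ≤ K) (hδ : 0 < δ) :
    ∃ C > (0:ℝ), ∀ φ : EuclideanSpace ℝ (Fin N) → ℝ,
      Integrable (fun x => |φ x| * (1 + ‖x‖ ^ K)) volume → ∀ t : ℝ, 0 < t →
        (∫ x, |heatSg N t φ x| * (1 + ‖x‖ ^ K)) ≤
          (1 + δ) * (∫ x, |φ x| * (1 + ‖x‖ ^ K)) +
            C * (1 + t ^ (K / 2)) * (∫ x, |φ x|) :=
  stmt_11_general N K δ hK hδ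
end

section
/- Let f ∈ L^1(ℝ^N, (1+|x|^K)dx) and define m_ν(f,t) inductively by m_0(f,t) = ∫ f dx and m_ν(f,t) = ∫ x^ν f dx − Σ_{ω ≤ ν, ω ≠ ν} m_ω(f,t) ∫ x^ν g_ω(x,t) dx for ν ≠ 0, where g_ω(x,t) = ((-1)^{|ω|}/ω!) ∂_x^ω G(x,t+1). Then for every multi-index ω with |ω| ≤ K and every t ≥ 0, ∫_{ℝ^N} x^ω [ f(x) − Σ_{|ν| ≤ K} m_ν(f,t) g_ν(x,t) ] dx = 0. -/
open Real MeasureTheory ENNReal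

noncomputable def pderiv (N : ℕ) (i : Fin N)
    (f : EuclideanSpace ℝ (Fin N) → ℝ) : EuclideanSpace ℝ (Fin N) → ℝ :=
  fun x => fderiv ℝ f x (EuclideanSpace.single i 1)

noncomputable def mpd (N : ℕ) (ν : Fin N → ℕ)
    (f : EuclideanSpace ℝ (Fin N) → ℝ) : EuclideanSpace ℝ (Fin N) → ℝ :=
  (List.finRange N).foldr (fun i g => (pderiv N i)^[ν i] g) f

noncomputable def gker (N : ℕ) (ν : Fin N → ℕ) (x : EuclideanSpace ℝ (Fin N)) (t : ℝ) : ℝ :=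
  ((-1 : ℝ) ^ (∑ i, ν i) / (∏ i, Nat.factorial (ν i) : ℕ)) *
    mpd N ν (fun y => heatK N y (t + 1)) x

/-!
The heat kernel factorises over the coordinates, so `∂^ν G(·, t + 1)` is a constant times
`∏ i, h_{ν i}(x i)` with `h_k = (d/ds)^k exp (-s² / (4 (t + 1)))`. Integrating by parts,
`∫ s^a h_{k+1} = -a ∫ s^(a-1) h_k`, hence `∫ s^a h_k = 0` for `a < k` and
`∫ s^k h_k = (-1)^k k! √(4π(t + 1))`. By Fubini, `∫ x^ω g_ν` vanishes unless `ν ≤ ω` and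
equals `1` for `ν = ω`, so the `ω`-th moment of `f - Σ m_ν g_ν` is
`∫ x^ω f - Σ_{ν ≤ ω} m_ν ∫ x^ω g_ν`, which is zero by the recursive definition of `m_ω`.
-/

noncomputable def gaussDeriv (b : ℝ) (k : ℕ) : ℝ → ℝ :=
  iteratedDeriv k fun s => exp (-b * s ^ 2)

namespace gaussDeriv

open Polynomial
open scoped ContDiff

variable {b : ℝ}

theorem hasDerivAt (b : ℝ) (k : ℕ) (s : ℝ) :
    HasDerivAt (gaussDeriv b k) (gaussDeriv b (k + 1) s) s := by
  have hsmooth : ContDiff ℝ ∞ (gaussDeriv b k) := by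
    rw [gaussDeriv, iteratedDeriv_eq_iterate]
    exact ContDiff.iterate_deriv k (by fun_prop)
  rw [show gaussDeriv b (k + 1) = deriv (gaussDeriv b k) from iteratedDeriv_succ]
  exact (hsmooth.differentiable (by simp)).differentiableAt.hasDerivAt

theorem exists_polynomial (b : ℝ) (k : ℕ) :
    ∃ p : ℝ[X], ∀ s, gaussDeriv b k s = p.eval s * exp (-b * s ^ 2) := by
  induction k with
  | zero => exact ⟨1, fun s => by simp [gaussDeriv]⟩
  | succ k ih =>
    obtain ⟨p, hp⟩ := ih
    refine ⟨derivative p - C (2 * b) * X * p, fun s => ?_⟩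
    have hgauss : HasDerivAt (fun s => exp (-b * s ^ 2)) (-(2 * b * s) * exp (-b * s ^ 2)) s := by
      simpa [mul_comm, mul_assoc, mul_left_comm] using ((hasDerivAt_pow 2 s).const_mul (-b)).exp
    have hk := hasDerivAt b k s
    rw [funext hp] at hk
    rw [hk.unique ((p.hasDerivAt s).fun_mul hgauss)]
    simp only [eval_sub, eval_mul, eval_C, eval_X]
    ring

theorem integrable_polynomial_mul_gaussian (hb : 0 < b) (p : ℝ[X]) :
    Integrable fun s => p.eval s * exp (-b * s ^ 2) := by
  simp_rw [eval_eq_sum_range, Finset.sum_mul]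
  refine integrable_finsetSum _ fun k _ => ?_
  simp_rw [mul_assoc]
  refine Integrable.const_mul ?_ _
  simpa [Real.rpow_natCast] using
    integrable_rpow_mul_exp_neg_mul_sq hb (s := k) (by linarith [k.cast_nonneg (α := ℝ)])

theorem integrable_pow_mul (hb : 0 < b) (a k : ℕ) :
    Integrable fun s => s ^ a * gaussDeriv b k s := by
  obtain ⟨p, hp⟩ := exists_polynomial b k
  convert integrable_polynomial_mul_gaussian hb (X ^ a * p) using 2 with s
  simp [hp, mul_assoc]

theorem integral_pow_mul_succ (hb : 0 < b) (a k : ℕ) :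
    ∫ s, s ^ a * gaussDeriv b (k + 1) s = -(a * ∫ s, s ^ (a - 1) * gaussDeriv b k s) := by
  have h := integral_mul_deriv_eq_deriv_mul_of_integrable
    (fun s _ => hasDerivAt_pow a s) (fun s _ => hasDerivAt b k s)
    (integrable_pow_mul hb a (k + 1))
    (by simpa [Pi.mul_def, mul_assoc] using (integrable_pow_mul hb (a - 1) k).const_mul (a : ℝ))
    (integrable_pow_mul hb a k)
  simpa only [mul_assoc, integral_const_mul] using h

theorem integral_pow_mul_of_lt (hb : 0 < b) {a k : ℕ} (h : a < k) :
    ∫ s, s ^ a * gaussDeriv b k s = 0 := by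
  obtain ⟨k, rfl⟩ := Nat.exists_eq_add_of_lt h
  induction a generalizing k with
  | zero => simpa using integral_pow_mul_succ hb 0 k
  | succ a ih =>
    rw [integral_pow_mul_succ hb, Nat.add_sub_cancel, show a + 1 + k = a + k + 1 by omega,
      ih k (by omega), mul_zero, neg_zero]

theorem integral_pow_mul_self (hb : 0 < b) (k : ℕ) :
    ∫ s, s ^ k * gaussDeriv b k s = (-1) ^ k * k.factorial * √(π / b) := by
  induction k with
  | zero => simpa [gaussDeriv] using integral_gaussian b
  | succ k ih =>
    rw [integral_pow_mul_succ hb, Nat.add_sub_cancel, ih, Nat.factorial_succ]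
    push_cast
    ring

end gaussDeriv

theorem EuclideanSpace.integral_fintype_prod_eq_prod {ι : Type*} [Fintype ι] (u : ι → ℝ → ℝ) :
    ∫ x : EuclideanSpace ℝ ι, ∏ i, u i (x i) = ∏ i, ∫ s, u i s := by
  rw [← (PiLp.volume_preserving_toLp ι).integral_comp
    (MeasurableEquiv.toLp 2 _).measurableEmbedding]
  exact integral_fintype_prod_volume_eq_prod u

theorem EuclideanSpace.integrable_fintype_prod {ι : Type*} [Fintype ι] {u : ι → ℝ → ℝ}
    (hu : ∀ i, Integrable (u i)) :
    Integrable fun x : EuclideanSpace ℝ ι => ∏ i, u i (x i) := by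
  rw [← (PiLp.volume_preserving_toLp ι).integrable_comp_emb
    (MeasurableEquiv.toLp 2 _).measurableEmbedding]
  exact Integrable.fintype_prod hu

section

variable {N : ℕ}

theorem pderiv_const_smul (i : Fin N) (c : ℝ) (F : EuclideanSpace ℝ (Fin N) → ℝ) :
    pderiv N i (c • F) = c • pderiv N i F := by
  ext x
  simp [pderiv, fderiv_const_smul_field]

theorem mpd_const_smul (ν : Fin N → ℕ) (c : ℝ) (F : EuclideanSpace ℝ (Fin N) → ℝ) :
    mpd N ν (c • F) = c • mpd N ν F := by
  unfold mpd
  induction List.finRange N with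
  | nil => rfl
  | cons i l ih =>
    simp only [List.foldr_cons, ih]
    exact Function.Commute.iterate_left (fun F => pderiv_const_smul i c F) _ _

variable {h : ℕ → ℝ → ℝ}

theorem pderiv_prod_of_hasDerivAt (hh : ∀ k s, HasDerivAt (h k) (h (k + 1) s) s)
    (i : Fin N) (κ : Fin N → ℕ) :
    pderiv N i (fun x => ∏ j, h (κ j) (x j)) =
      fun x => ∏ j, h ((κ + Pi.single i 1 : Fin N → ℕ) j) (x j) := by
  ext x
  have hF : HasFDerivAt (fun x : EuclideanSpace ℝ (Fin N) => ∏ j, h (κ j) (x j))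
      (∑ j, (∏ l ∈ Finset.univ.erase j, h (κ l) (x l)) •
        (h (κ j + 1) (x j) • EuclideanSpace.proj (𝕜 := ℝ) j)) x :=
    HasFDerivAt.finsetProd fun j _ =>
      (hh (κ j) (x j)).comp_hasFDerivAt x (EuclideanSpace.proj (𝕜 := ℝ) j).hasFDerivAt
  rw [pderiv, hF.fderiv, ← Finset.mul_prod_erase _ _ (Finset.mem_univ i),
    Finset.prod_congr rfl fun j hj => by
      rw [Pi.add_apply, Pi.single_eq_of_ne (Finset.ne_of_mem_erase hj), add_zero]]
  simp [Finset.sum_ite_eq', mul_comm]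

theorem iterate_pderiv_prod_of_hasDerivAt (hh : ∀ k s, HasDerivAt (h k) (h (k + 1) s) s)
    (i : Fin N) (m : ℕ) (κ : Fin N → ℕ) :
    (pderiv N i)^[m] (fun x => ∏ j, h (κ j) (x j)) =
      fun x => ∏ j, h ((κ + Pi.single i m : Fin N → ℕ) j) (x j) := by
  induction m generalizing κ with
  | zero => simp
  | succ m ih =>
    rw [Function.iterate_succ_apply, pderiv_prod_of_hasDerivAt hh, ih, add_assoc,
      ← Pi.single_add, add_comm 1 m]

theorem mpd_prod_of_hasDerivAt (hh : ∀ k s, HasDerivAt (h k) (h (k + 1) s) s)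
    (ν κ : Fin N → ℕ) :
    mpd N ν (fun x => ∏ j, h (κ j) (x j)) = fun x => ∏ j, h ((κ + ν) j) (x j) := by
  suffices ∀ l : List (Fin N), l.foldr (fun i g => (pderiv N i)^[ν i] g)
      (fun x => ∏ j, h (κ j) (x j)) =
      fun x => ∏ j, h ((κ + (l.map fun i => Pi.single i (ν i)).sum) j) (x j) by
    rw [mpd, this, ← Fin.sum_univ_def, Finset.univ_sum_single]
  intro l
  induction l generalizing κ with
  | nil => simp
  | cons i l ih =>
    rw [List.foldr_cons, ih, iterate_pderiv_prod_of_hasDerivAt hh, List.map_cons, List.sum_cons,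
      add_assoc, add_comm _ (Pi.single _ _)]

theorem heatK_eq_smul_prod (t : ℝ) :
    (fun x => heatK N x t) =
      (4 * π * t) ^ (-(N : ℝ) / 2) • fun x => ∏ i, gaussDeriv (4 * t)⁻¹ 0 (x i) := by
  ext x
  simp only [heatK, Pi.smul_apply, smul_eq_mul, gaussDeriv, iteratedDeriv_zero, ← Real.exp_sum,
    EuclideanSpace.norm_sq_eq, Real.norm_eq_abs, sq_abs, ← Finset.mul_sum]
  ring_nf

theorem gker_eq_mul_prod (ν : Fin N → ℕ) (x : EuclideanSpace ℝ (Fin N)) (t : ℝ) :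
    gker N ν x t = (-1) ^ (∑ i, ν i) / (∏ i, (ν i).factorial : ℕ) *
      (4 * π * (t + 1)) ^ (-(N : ℝ) / 2) * ∏ i, gaussDeriv (4 * (t + 1))⁻¹ (ν i) (x i) := by
  rw [gker, heatK_eq_smul_prod, mpd_const_smul, mpd_prod_of_hasDerivAt (gaussDeriv.hasDerivAt _)]
  simp only [Pi.smul_apply, smul_eq_mul, Pi.add_apply, zero_add, mul_assoc]

theorem monomial_mul_gker_eq (ω ν : Fin N → ℕ) (t : ℝ) :
    (fun x : EuclideanSpace ℝ (Fin N) => (∏ i, x i ^ ω i) * gker N ν x t) =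
      fun x => (-1) ^ (∑ i, ν i) / (∏ i, (ν i).factorial : ℕ) * (4 * π * (t + 1)) ^ (-(N : ℝ) / 2) *
        ∏ i, x i ^ ω i * gaussDeriv (4 * (t + 1))⁻¹ (ν i) (x i) := by
  ext x
  rw [gker_eq_mul_prod, Finset.prod_mul_distrib]
  ring

theorem integrable_monomial_mul_gker {t : ℝ} (ht : 0 < t + 1) (ω ν : Fin N → ℕ) :
    Integrable fun x : EuclideanSpace ℝ (Fin N) => (∏ i, x i ^ ω i) * gker N ν x t := by
  rw [monomial_mul_gker_eq]
  exact (EuclideanSpace.integrable_fintype_prod fun i =>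
    gaussDeriv.integrable_pow_mul (by positivity) (ω i) (ν i)).const_mul _

theorem integral_monomial_mul_gker (ω ν : Fin N → ℕ) (t : ℝ) :
    ∫ x : EuclideanSpace ℝ (Fin N), (∏ i, x i ^ ω i) * gker N ν x t =
      (-1) ^ (∑ i, ν i) / (∏ i, (ν i).factorial : ℕ) * (4 * π * (t + 1)) ^ (-(N : ℝ) / 2) *
        ∏ i, ∫ s, s ^ ω i * gaussDeriv (4 * (t + 1))⁻¹ (ν i) s := by
  rw [monomial_mul_gker_eq, integral_const_mul,
    EuclideanSpace.integral_fintype_prod_eq_prod fun i s => s ^ ω i * gaussDeriv _ (ν i) s]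

theorem integral_monomial_mul_gker_of_not_le {t : ℝ} (ht : 0 < t + 1) {ω ν : Fin N → ℕ}
    (h : ¬ν ≤ ω) :
    ∫ x : EuclideanSpace ℝ (Fin N), (∏ i, x i ^ ω i) * gker N ν x t = 0 := by
  obtain ⟨i, hi⟩ : ∃ i, ω i < ν i := by simpa [Pi.le_def] using h
  rw [integral_monomial_mul_gker, Finset.prod_eq_zero (Finset.mem_univ i)
    (f := fun i => ∫ s, s ^ ω i * gaussDeriv (4 * (t + 1))⁻¹ (ν i) s)
    (gaussDeriv.integral_pow_mul_of_lt (by positivity) hi), mul_zero]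

theorem integral_monomial_mul_gker_self {t : ℝ} (ht : 0 < t + 1) (ω : Fin N → ℕ) :
    ∫ x : EuclideanSpace ℝ (Fin N), (∏ i, x i ^ ω i) * gker N ω x t = 1 := by
  have hA : 0 < 4 * π * (t + 1) := by positivity
  have hb : 0 < (4 * (t + 1))⁻¹ := by positivity
  have hfact : ((∏ i, (ω i).factorial : ℕ) : ℝ) ≠ 0 := by positivity
  simp_rw [integral_monomial_mul_gker, gaussDeriv.integral_pow_mul_self hb, div_inv_eq_mul,
    Finset.prod_mul_distrib, Finset.prod_pow_eq_pow_sum, Finset.prod_const, Finset.card_univ,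
    Fintype.card_fin]
  have hsqrt : √(π * (4 * (t + 1))) ^ N = (4 * π * (t + 1)) ^ ((N : ℝ) / 2) := by
    rw [Real.sqrt_eq_rpow, ← Real.rpow_natCast, ← Real.rpow_mul (by positivity)]
    ring_nf
  have hsign : ((-1 : ℝ) ^ ∑ i, ω i) ^ 2 = 1 := by
    rw [← pow_mul, mul_comm, pow_mul]; norm_num
  have hpow : (4 * π * (t + 1)) ^ (-(N : ℝ) / 2) * (4 * π * (t + 1)) ^ ((N : ℝ) / 2) = 1 := by
    rw [← Real.rpow_add hA, neg_div, neg_add_cancel, Real.rpow_zero]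
  rw [hsqrt, ← Nat.cast_prod]
  calc _ = ((-1 : ℝ) ^ ∑ i, ω i) ^ 2 *
        ((4 * π * (t + 1)) ^ (-(N : ℝ) / 2) * (4 * π * (t + 1)) ^ ((N : ℝ) / 2)) *
        (((∏ i, (ω i).factorial : ℕ) : ℝ) / (∏ i, (ω i).factorial : ℕ)) := by ring
    _ = 1 := by rw [hsign, hpow, div_self hfact, one_mul, one_mul]

theorem integral_monomial_mul_eq_sum_Iic {t : ℝ} (ht : 0 < t + 1)
    (f : EuclideanSpace ℝ (Fin N) → ℝ) (m : (Fin N → ℕ) → ℝ) (hm0 : m 0 = ∫ x, f x)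
    (hmrec : ∀ ν, ν ≠ 0 → m ν = (∫ x, (∏ i, x i ^ ν i) * f x) -
      ∑ ω ∈ (Finset.Iic ν).filter (· ≠ ν), m ω * ∫ x, (∏ i, x i ^ ν i) * gker N ω x t)
    (ω : Fin N → ℕ) :
    ∫ x, (∏ i, x i ^ ω i) * f x =
      ∑ ν ∈ Finset.Iic ω, m ν * ∫ x, (∏ i, x i ^ ω i) * gker N ν x t := by
  rw [← Finset.add_sum_erase _ _ (Finset.mem_Iic.2 le_rfl), integral_monomial_mul_gker_self ht,
    mul_one, ← Finset.filter_ne']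
  rcases eq_or_ne ω 0 with rfl | hω
  · have hempty : (Finset.Iic (0 : Fin N → ℕ)).filter (· ≠ 0) = ∅ :=
      Finset.filter_false_of_mem fun ν hν => not_not.2 (nonpos_iff_eq_zero.1 (Finset.mem_Iic.1 hν))
    simp [hm0, hempty]
  · rw [hmrec ω hω]
    ring

end

theorem stmt_12_general (N : ℕ) (K : ℝ)
    (f : EuclideanSpace ℝ (Fin N) → ℝ)
    (M : ℝ → (Fin N → ℕ) → ℝ)
    (hM0 : ∀ t : ℝ, M t 0 = ∫ x, f x)
    (hMrec : ∀ t : ℝ, ∀ ν : Fin N → ℕ, ν ≠ 0 →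
      M t ν = (∫ x, (∏ i, x i ^ ν i) * f x) -
        ∑ ω ∈ (Finset.Iic ν).filter (· ≠ ν),
          M t ω * ∫ x, (∏ i, x i ^ ν i) * gker N ω x t) :
    ∀ t ≥ (0:ℝ), ∀ ω : Fin N → ℕ, (∑ i, (ω i : ℝ)) ≤ K →
      (∫ x, (∏ i, x i ^ ω i) *
        (f x - ∑ ν ∈ (Finset.Iic (fun _ => ⌊K⌋₊ : Fin N → ℕ)).filter
            (fun ν => (∑ i, (ν i : ℝ)) ≤ K),
          M t ν * gker N ν x t)) = 0 := by
  intro t ht ω hω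
  set S := (Finset.Iic (fun _ => ⌊K⌋₊ : Fin N → ℕ)).filter (fun ν => (∑ i, (ν i : ℝ)) ≤ K)
  have ht1 : 0 < t + 1 := by linarith
  have hIic : Finset.Iic ω ⊆ S := by
    intro ν hν
    have hν : ∑ i, (ν i : ℝ) ≤ K :=
      (Finset.sum_le_sum fun i _ => by exact_mod_cast Finset.mem_Iic.1 hν i).trans hω
    refine Finset.mem_filter.2 ⟨Finset.mem_Iic.2 fun i => Nat.le_floor ?_, hν⟩
    exact (Finset.single_le_sum (fun j _ => (ν j).cast_nonneg) (Finset.mem_univ i)).trans hν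
  have hg : ∀ ν, Integrable fun x : EuclideanSpace ℝ (Fin N) =>
      (∏ i, x i ^ ω i) * (M t ν * gker N ν x t) := fun ν => by
    simpa only [mul_left_comm] using (integrable_monomial_mul_gker ht1 ω ν).const_mul (M t ν)
  have hsum := integrable_finsetSum S fun ν _ => hg ν
  by_cases hf : Integrable fun x => (∏ i, x i ^ ω i) * f x
  · simp_rw [mul_sub, Finset.mul_sum]
    rw [integral_sub hf hsum, integral_finsetSum S fun ν _ => hg ν]
    simp_rw [mul_left_comm _ (M t _), integral_const_mul]
    rw [integral_monomial_mul_eq_sum_Iic ht1 f (M t) (hM0 t) (hMrec t), sub_eq_zero]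
    refine Finset.sum_subset hIic fun ν _ hν => ?_
    rw [integral_monomial_mul_gker_of_not_le ht1 (by simpa using hν), mul_zero]
  · -- the integrand is not integrable either, so its integral is `0` by convention
    refine integral_undef fun h => hf ?_
    refine (h.add hsum).congr (ae_of_all _ fun x => ?_)
    simp only [Pi.add_apply, mul_sub, Finset.mul_sum, sub_add_cancel]

theorem stmt_12 (N : ℕ) (hN : 1 ≤ N) (K : ℝ) (hK : 0 ≤ K)
    (f : EuclideanSpace ℝ (Fin N) → ℝ)
    (hf : Integrable (fun x => |f x| * (1 + ‖x‖ ^ K)) volume)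
    (M : ℝ → (Fin N → ℕ) → ℝ)
    (hM0 : ∀ t : ℝ, M t 0 = ∫ x, f x)
    (hMrec : ∀ t : ℝ, ∀ ν : Fin N → ℕ, ν ≠ 0 →
      M t ν = (∫ x, (∏ i, x i ^ ν i) * f x) -
        ∑ ω ∈ (Finset.Iic ν).filter (· ≠ ν),
          M t ω * ∫ x, (∏ i, x i ^ ν i) * gker N ω x t) :
    ∀ t ≥ (0:ℝ), ∀ ω : Fin N → ℕ, (∑ i, (ω i : ℝ)) ≤ K →
      (∫ x, (∏ i, x i ^ ω i) *
        (f x - ∑ ν ∈ (Finset.Iic (fun _ => ⌊K⌋₊ : Fin N → ℕ)).filter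
            (fun ν => (∑ i, (ν i : ℝ)) ≤ K),
          M t ν * gker N ν x t)) = 0 :=
  stmt_12_general N K f M hM0 hMrec
end
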